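/- arXiv:0711.0719 — 3 statements merged into one kernel-verified Lean document; each statement's English description precedes it below -/
import Mathlib

section
/- Let 0 < β < 1/2, h_n = (log n)^{−β}, and let c > 0 and ρ > 1 be constants. Then (exp(1/(2h_n²))/h_n) · exp(−c·n·exp(−1/h_n²)) · n^{ρ−1} → 0 as n → ∞; equivalently, exp((log n)^{2β}/2)·(log n)^{β}·exp(−c·n·exp(−(log n)^{2β}))·n^{ρ−1} → 0. -/
/-!
With `t = log n` the expression equals
`exp (t ^ (2β) / 2 + β log t + (ρ - 1) t - c exp (t - t ^ (2β)))`.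
Since `2β < 1` we have `t - t ^ (2β) ≥ t / 2` eventually, so the term `-c exp (t - t ^ (2β))`
beats the remaining `O(t)` terms and the exponent tends to `-∞`.
-/

open Filter Real Asymptotics

theorem isLittleO_rpow_id_atTop {a : ℝ} (ha : a < 1) : (fun t : ℝ => t ^ a) =o[atTop] id := by
  refine isLittleO_of_tendsto' ?_ ?_
  · filter_upwards [eventually_gt_atTop 0] with t ht h0
    exact absurd h0 ht.ne'
  refine (tendsto_rpow_neg_atTop (sub_pos.2 ha)).congr' ?_
  filter_upwards [eventually_gt_atTop 0] with t ht
  rw [id, ← rpow_sub_one ht.ne', neg_sub]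

theorem tendsto_sub_mul_exp_sub_rpow_atBot {f : ℝ → ℝ} {a c : ℝ} (ha : a < 1) (hc : 0 < c)
    (hf : f =O[atTop] id) : Tendsto (fun t => f t - c * exp (t - t ^ a)) atTop atBot := by
  have hexp : Tendsto (fun t => c * exp (t / 2)) atTop atTop :=
    (tendsto_exp_atTop.comp (tendsto_id.atTop_div_const two_pos)).const_mul_atTop hc
  have hf_exp : f =o[atTop] fun t => c * exp (t / 2) := by
    refine hf.trans_isLittleO (IsLittleO.const_mul_right hc.ne' ?_)
    have h := isLittleO_pow_exp_pos_mul_atTop 1 (inv_pos.2 (two_pos (α := ℝ)))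
    simp only [pow_one, ← div_eq_inv_mul] at h
    exact h
  have hdiff : Tendsto (fun t => f t - c * exp (t / 2)) atTop atBot := by
    rw [← tendsto_neg_atTop_iff]
    convert (IsEquivalent.refl.sub_isLittleO hf_exp).symm.tendsto_atTop hexp using 1
    ext t
    simp
  refine tendsto_atBot_mono' _ ?_ hdiff
  filter_upwards [(isLittleO_rpow_id_atTop ha).bound one_half_pos, eventually_ge_atTop 0]
    with t ht ht0
  have hrpow_le : t ^ a ≤ t / 2 := by
    simpa [abs_of_nonneg ht0, div_eq_inv_mul] using (le_abs_self _).trans ht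
  gcongr
  linarith

theorem exp_inv_bandwidth_mul_exp_neg_eq_exp (β c ρ : ℝ) {x : ℝ} (hx : 0 < x)
    (hlog : 0 < log x) :
    exp (1 / (2 * (log x ^ (-β)) ^ 2)) / log x ^ (-β) *
        exp (-(c * x * exp (-(1 / (log x ^ (-β)) ^ 2)))) * x ^ (ρ - 1) =
      exp (log x ^ (2 * β) / 2 + β * log (log x) + (ρ - 1) * log x
        - c * exp (log x - log x ^ (2 * β))) := by
  set t := log x
  have hsq : 1 / (t ^ (-β)) ^ 2 = t ^ (2 * β) := by
    rw [← rpow_natCast, ← rpow_mul hlog.le, one_div, ← rpow_neg hlog.le]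
    ring_nf
  have hhalf : 1 / (2 * (t ^ (-β)) ^ 2) = t ^ (2 * β) / 2 := by
    rw [← hsq]
    ring
  have hinv : (t ^ (-β))⁻¹ = exp (β * log t) := by
    rw [← rpow_neg hlog.le, neg_neg, rpow_def_of_pos hlog, mul_comm]
  have hpow : x ^ (ρ - 1) = exp ((ρ - 1) * t) := by
    rw [rpow_def_of_pos hx, mul_comm]
  have hmul : c * x * exp (-t ^ (2 * β)) = c * exp (t - t ^ (2 * β)) := by
    rw [← exp_log hx, mul_assoc, ← exp_add, ← sub_eq_add_neg]
  rw [div_eq_mul_inv, hinv, hhalf, hsq, hpow, hmul, ← exp_add, ← exp_add, ← exp_add]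
  congr 1
  ring

theorem exp_inv_bandwidth_mul_exp_neg_tendsto_zero_general
    (β c ρ : ℝ) (hβ' : β < 1 / 2) (hc : 0 < c)
    (h : ℕ → ℝ) (hh : ∀ n : ℕ, h n = Real.log n ^ (-β)) :
    Tendsto (fun n : ℕ =>
        Real.exp (1 / (2 * h n ^ 2)) / h n *
          Real.exp (-(c * n * Real.exp (-(1 / h n ^ 2)))) * (n : ℝ) ^ (ρ - 1))
      atTop (nhds 0) := by
  have h2β : 2 * β < 1 := by linarith
  have hf : (fun t => t ^ (2 * β) / 2 + β * log t + (ρ - 1) * t) =O[atTop] id := by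
    refine .add (.add ?_ (isLittleO_log_id_atTop.isBigO.const_mul_left β))
      ((isBigO_refl id atTop).const_mul_left (ρ - 1))
    simpa only [div_eq_inv_mul] using (isLittleO_rpow_id_atTop h2β).isBigO.const_mul_left 2⁻¹
  have hlog : Tendsto (fun n : ℕ => log n) atTop atTop :=
    tendsto_log_atTop.comp tendsto_natCast_atTop_atTop
  refine (tendsto_exp_atBot.comp
    ((tendsto_sub_mul_exp_sub_rpow_atBot h2β hc hf).comp hlog)).congr' ?_
  filter_upwards [eventually_gt_atTop 0, hlog.eventually_gt_atTop 0] with n hn hlogn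
  rw [hh, exp_inv_bandwidth_mul_exp_neg_eq_exp β c ρ (Nat.cast_pos.2 hn) hlogn]
  rfl

/-- For `0 < β < 1/2`, `hₙ = (log n)^{-β}`, `c > 0` and `ρ > 1`,
`(exp(1/(2hₙ²))/hₙ) exp(-c n exp(-1/hₙ²)) n^{ρ-1} → 0` as `n → ∞`. -/
theorem exp_inv_bandwidth_mul_exp_neg_tendsto_zero
    (β c ρ : ℝ) (hβ : 0 < β) (hβ' : β < 1 / 2) (hc : 0 < c) (hρ : 1 < ρ)
    (h : ℕ → ℝ) (hh : ∀ n : ℕ, h n = Real.log n ^ (-β)) :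
    Tendsto (fun n : ℕ =>
        Real.exp (1 / (2 * h n ^ 2)) / h n *
          Real.exp (-(c * n * Real.exp (-(1 / h n ^ 2)))) * (n : ℝ) ^ (ρ - 1))
      atTop (nhds 0) :=
  exp_inv_bandwidth_mul_exp_neg_tendsto_zero_general β c ρ hβ' hc h hh
end

section
/- Let φ : ℝ → ℂ be a bounded measurable function with φ(t) → 0 as |t| → ∞. Then (1/(h·exp(1/(2h²)))) · ∫_{−1/h}^{1/h} e^{t²/2} |φ(t)| dt → 0 as h → 0⁺. -/
/-!
Put `T = 1/h`. The Gaussian-type integral satisfies `∫_{-T}^{T} e^{t²/2} dt ≤ 12 e^{T²/2} / T`,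
so the weight `T e^{-T²/2}` keeps `∫_{-T}^{T} e^{t²/2} ε dt` below `12 ε`. Given `ε`, the function
`|φ|` is at most `ε` outside some `[-M, M]`, and on `[-M, M]` the integrand is bounded by a
constant `C`, contributing `O(T² e^{-T²/2}) → 0` after weighting.
-/

open MeasureTheory Filter

open Real Set Topology

lemma integral_one_add_sq_mul_exp_sq_half (T : ℝ) :
    ∫ t in -T..T, (1 + t ^ 2) * exp (t ^ 2 / 2) = 2 * T * exp (T ^ 2 / 2) := by
  have hderiv (t : ℝ) :
      HasDerivAt (fun t ↦ t * exp (t ^ 2 / 2)) ((1 + t ^ 2) * exp (t ^ 2 / 2)) t := by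
    refine ((hasDerivAt_id' t).mul ((hasDerivAt_pow 2 t).div_const 2).exp).congr_deriv ?_
    norm_num; ring
  rw [intervalIntegral.integral_eq_sub_of_hasDerivAt (fun t _ ↦ hderiv t)
    (by apply Continuous.intervalIntegrable; fun_prop)]
  simp only [neg_sq]; ring

-- Split at `t² = T²/2`: below, use `e^{t²/2} ≤ e^{T²/4}`; above, `1 ≤ 2 t² / T²`.
lemma exp_sq_half_le_exp_sq_quarter_add {T : ℝ} (hT : T ≠ 0) (t : ℝ) :
    exp (t ^ 2 / 2) ≤ exp (T ^ 2 / 4) + 2 / T ^ 2 * ((1 + t ^ 2) * exp (t ^ 2 / 2)) := by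
  rcases le_or_gt (t ^ 2) (T ^ 2 / 2) with ht | ht
  · have := exp_le_exp.mpr (show t ^ 2 / 2 ≤ T ^ 2 / 4 by linarith)
    have : 0 ≤ 2 / T ^ 2 * ((1 + t ^ 2) * exp (t ^ 2 / 2)) := by positivity
    linarith
  · have : 1 ≤ 2 / T ^ 2 * (1 + t ^ 2) := by
      rw [div_mul_eq_mul_div, le_div_iff₀ (by positivity)]; nlinarith
    nlinarith [exp_pos (t ^ 2 / 2), exp_pos (T ^ 2 / 4)]

lemma integral_exp_sq_half_le {T : ℝ} (hT : 0 < T) :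
    ∫ t in Icc (-T) T, exp (t ^ 2 / 2) ≤ 12 / T * exp (T ^ 2 / 2) := by
  have hint : IntegrableOn (fun t : ℝ ↦ 2 / T ^ 2 * ((1 + t ^ 2) * exp (t ^ 2 / 2))) (Icc (-T) T) :=
    (by fun_prop : Continuous _).integrableOn_Icc
  have hcenter : 2 * T * exp (T ^ 2 / 4) ≤ 8 / T * exp (T ^ 2 / 2) := by
    have hsplit : exp (T ^ 2 / 2) = exp (T ^ 2 / 4) * exp (T ^ 2 / 4) := by
      rw [← exp_add]; ring_nf
    rw [div_mul_eq_mul_div, le_div_iff₀ hT, hsplit]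
    nlinarith [exp_pos (T ^ 2 / 4), add_one_le_exp (T ^ 2 / 4)]
  calc ∫ t in Icc (-T) T, exp (t ^ 2 / 2)
      ≤ ∫ t in Icc (-T) T, (exp (T ^ 2 / 4) + 2 / T ^ 2 * ((1 + t ^ 2) * exp (t ^ 2 / 2))) :=
        setIntegral_mono_on (by fun_prop : Continuous _).integrableOn_Icc
          (by fun_prop : Continuous _).integrableOn_Icc measurableSet_Icc
          fun t _ ↦ exp_sq_half_le_exp_sq_quarter_add hT.ne' t
    _ = 2 * T * exp (T ^ 2 / 4) + 4 / T * exp (T ^ 2 / 2) := by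
        rw [integral_add (integrable_const _) hint, setIntegral_const, measureReal_def,
          volume_Icc, ENNReal.toReal_ofReal (by linarith), smul_eq_mul, integral_const_mul,
          integral_Icc_eq_integral_Ioc, ← intervalIntegral.integral_of_le (by linarith),
          integral_one_add_sq_mul_exp_sq_half]
        field_simp; ring
    _ ≤ 8 / T * exp (T ^ 2 / 2) + 4 / T * exp (T ^ 2 / 2) := by gcongr
    _ = 12 / T * exp (T ^ 2 / 2) := by ring

lemma integral_exp_sq_half_mul_le {f : ℝ → ℝ} (hf : 0 ≤ f) {C ε T : ℝ} (hε : 0 ≤ ε)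
    (hT : 0 < T) (hbound : ∀ t, exp (t ^ 2 / 2) * f t ≤ C + ε * exp (t ^ 2 / 2)) :
    ∫ t in Icc (-T) T, exp (t ^ 2 / 2) * f t ≤ 2 * T * C + ε * (12 / T * exp (T ^ 2 / 2)) := by
  calc ∫ t in Icc (-T) T, exp (t ^ 2 / 2) * f t
      ≤ ∫ t in Icc (-T) T, (C + ε * exp (t ^ 2 / 2)) :=
        integral_mono_of_nonneg (.of_forall fun t ↦ mul_nonneg (exp_pos _).le (hf t))
          ((integrable_const _).add ((by fun_prop : Continuous _).integrableOn_Icc))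
          (.of_forall hbound)
    _ = 2 * T * C + ε * ∫ t in Icc (-T) T, exp (t ^ 2 / 2) := by
        rw [integral_add (integrable_const _) (by fun_prop : Continuous _).integrableOn_Icc,
          integral_const_mul, setIntegral_const, measureReal_def, volume_Icc,
          ENNReal.toReal_ofReal (by linarith), smul_eq_mul]
        ring
    _ ≤ 2 * T * C + ε * (12 / T * exp (T ^ 2 / 2)) := by
        gcongr; exact integral_exp_sq_half_le hT

lemma exists_exp_sq_half_mul_norm_le {E : Type*} [NormedAddCommGroup E] {φ : ℝ → E}
    (hbdd : ∃ C, ∀ t, ‖φ t‖ ≤ C) (hlim : Tendsto φ (cocompact ℝ) (𝓝 0)) {ε : ℝ} (hε : 0 < ε) :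
    ∃ C, ∀ t, exp (t ^ 2 / 2) * ‖φ t‖ ≤ C + ε * exp (t ^ 2 / 2) := by
  obtain ⟨B, hB⟩ := hbdd
  have hsmall : ∀ᶠ t in comap norm atTop, ‖φ t‖ ≤ ε := by
    rw [comap_norm_atTop, Metric.cobounded_eq_cocompact]
    exact hlim.norm.eventually (ge_mem_nhds (by simpa using hε))
  obtain ⟨M, hM⟩ := eventually_atTop.mp (eventually_comap.mp hsmall)
  refine ⟨exp (M ^ 2 / 2) * B, fun t ↦ ?_⟩
  have hB0 : 0 ≤ B := (norm_nonneg _).trans (hB 0)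
  rcases le_total M |t| with ht | ht
  · have := mul_le_mul_of_nonneg_left (hM |t| ht t (norm_eq_abs t)) (exp_pos (t ^ 2 / 2)).le
    nlinarith [exp_pos (M ^ 2 / 2)]
  · have hexp : exp (t ^ 2 / 2) ≤ exp (M ^ 2 / 2) :=
      exp_le_exp.mpr (by nlinarith [sq_abs t, abs_nonneg t])
    nlinarith [mul_le_mul hexp (hB t) (norm_nonneg _) (exp_pos _).le, exp_pos (t ^ 2 / 2)]

lemma tendsto_sq_div_exp_sq_half_atTop :
    Tendsto (fun T : ℝ ↦ T ^ 2 / exp (T ^ 2 / 2)) atTop (𝓝 0) := by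
  have hsq : Tendsto (fun T : ℝ ↦ T ^ 2 / 2) atTop atTop :=
    (tendsto_pow_atTop two_ne_zero).atTop_div_const two_pos
  convert ((tendsto_pow_mul_exp_neg_atTop_nhds_zero 1).comp hsq).const_mul 2 using 1
  · ext T; simp only [Function.comp_apply, exp_neg]; field_simp
  · simp

theorem tendsto_div_exp_sq_half_mul_integral_atTop {E : Type*} [NormedAddCommGroup E]
    {φ : ℝ → E} (hbdd : ∃ C, ∀ t, ‖φ t‖ ≤ C) (hlim : Tendsto φ (cocompact ℝ) (𝓝 0)) :
    Tendsto (fun T ↦ T / exp (T ^ 2 / 2) * ∫ t in Icc (-T) T, exp (t ^ 2 / 2) * ‖φ t‖)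
      atTop (𝓝 0) := by
  refine tendsto_order.2 ⟨fun a ha ↦ ?_, fun a ha ↦ ?_⟩
  · filter_upwards [eventually_ge_atTop 0] with T hT
    exact ha.trans_le (mul_nonneg (by positivity)
      (setIntegral_nonneg measurableSet_Icc fun t _ ↦ by positivity))
  · obtain ⟨C, hC⟩ := exists_exp_sq_half_mul_norm_le hbdd hlim (by positivity : 0 < a / 24)
    have hgrowth := (tendsto_sq_div_exp_sq_half_atTop.const_mul (2 * C)).eventually
      (gt_mem_nhds (by rw [mul_zero]; positivity : 2 * C * 0 < a / 2))
    filter_upwards [hgrowth, eventually_gt_atTop 0] with T hsmall hT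
    calc T / exp (T ^ 2 / 2) * ∫ t in Icc (-T) T, exp (t ^ 2 / 2) * ‖φ t‖
        ≤ T / exp (T ^ 2 / 2) * (2 * T * C + a / 24 * (12 / T * exp (T ^ 2 / 2))) := by
          gcongr
          exact integral_exp_sq_half_mul_le (fun t ↦ norm_nonneg _) (by positivity) hT hC
      _ = 2 * C * (T ^ 2 / exp (T ^ 2 / 2)) + a / 2 := by field_simp; ring
      _ < a := by linarith

theorem inv_exp_mul_integral_exp_mul_vanishing_tendsto_zero_general
    (φ : ℝ → ℂ)
    (hφ_bdd : ∃ Cb : ℝ, ∀ t : ℝ, ‖φ t‖ ≤ Cb)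
    (hφ_lim : Tendsto φ (cocompact ℝ) (nhds 0)) :
    Tendsto (fun h : ℝ =>
        1 / (h * Real.exp (1 / (2 * h ^ 2))) *
          ∫ t in Set.Icc (-(1 / h)) (1 / h), Real.exp (t ^ 2 / 2) * ‖φ t‖)
      (nhdsWithin 0 (Set.Ioi 0)) (nhds 0) := by
  convert (tendsto_div_exp_sq_half_mul_integral_atTop hφ_bdd hφ_lim).comp
    tendsto_inv_nhdsGT_zero using 2 with h
  simp only [Function.comp_apply]
  field_simp

/-- If `φ : ℝ → ℂ` is bounded, measurable and vanishes at infinity, then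
`(1/(h exp(1/(2h²)))) ∫_{-1/h}^{1/h} e^{t²/2} |φ(t)| dt → 0` as `h → 0⁺`. -/
theorem inv_exp_mul_integral_exp_mul_vanishing_tendsto_zero
    (φ : ℝ → ℂ) (hφ_meas : Measurable φ)
    (hφ_bdd : ∃ Cb : ℝ, ∀ t : ℝ, ‖φ t‖ ≤ Cb)
    (hφ_lim : Tendsto φ (cocompact ℝ) (nhds 0)) :
    Tendsto (fun h : ℝ =>
        1 / (h * Real.exp (1 / (2 * h ^ 2))) *
          ∫ t in Set.Icc (-(1 / h)) (1 / h), Real.exp (t ^ 2 / 2) * ‖φ t‖)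
      (nhdsWithin 0 (Set.Ioi 0)) (nhds 0) :=
  inv_exp_mul_integral_exp_mul_vanishing_tendsto_zero_general φ hφ_bdd hφ_lim
end

section
/- Let c(h) = ∫_0^1 exp(x²/(2h²)) dx. Then c(h) / (h² · exp(1/(2h²))) → 1 as h → 0⁺. -/
/-! The mass of `exp (a x²)` on `[0, 1]` concentrates at `x = 1` as `a → ∞`, where
`a x² ≈ a - 2a (1 - x)`. Bounding the convex function `x²` below by its tangent `2x - 1` at `1`,
and above on `[s, 1]` by its chord `(1 + s) x - s`, both integrals are explicit and equal
`exp a / (2a)` up to the factors `1 - exp (-2a)` and `2 / (1 + s)`; the remaining integral over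
`[0, s]` is at most `exp (a s²)`, exponentially smaller. Letting `s → 1` gives
`∫₀¹ exp (a x²) dx ~ exp a / (2a)`, and the theorem is the case `a = 1 / (2h²)`. -/

open MeasureTheory Filter
open Topology Real intervalIntegral

lemma integral_exp_mul_add {c : ℝ} (hc : c ≠ 0) (d a b : ℝ) :
    ∫ x in a..b, exp (c * x + d) = (exp (c * b + d) - exp (c * a + d)) / c := by
  rw [integral_comp_mul_add exp hc, integral_exp, smul_eq_mul]
  field_simp

lemma exp_sub_exp_neg_div_le_integral_exp_mul_sq {a : ℝ} (ha : 0 < a) :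
    (exp a - exp (-a)) / (2 * a) ≤ ∫ x in (0 : ℝ)..1, exp (a * x ^ 2) := by
  calc (exp a - exp (-a)) / (2 * a) = ∫ x in (0 : ℝ)..1, exp (2 * a * x + -a) := by
        rw [integral_exp_mul_add (by positivity)]
        ring_nf
    _ ≤ ∫ x in (0 : ℝ)..1, exp (a * x ^ 2) := by
        refine integral_mono_on zero_le_one ((by fun_prop : Continuous _).intervalIntegrable _ _)
          ((by fun_prop : Continuous _).intervalIntegrable _ _) fun x _ => ?_
        gcongr
        nlinarith [sq_nonneg (x - 1)]

lemma integral_exp_mul_sq_le {a s : ℝ} (ha : 0 < a) (hs : s ∈ Set.Ioo (0 : ℝ) 1) :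
    ∫ x in (0 : ℝ)..1, exp (a * x ^ 2) ≤ s * exp (a * s ^ 2) + exp a / (a * (1 + s)) := by
  obtain ⟨hs0, hs1⟩ := hs
  have hint : ∀ u v : ℝ, IntervalIntegrable (fun x => exp (a * x ^ 2)) volume u v :=
    fun u v => (by fun_prop : Continuous _).intervalIntegrable u v
  rw [← integral_add_adjacent_intervals (hint 0 s) (hint s 1)]
  gcongr
  · calc ∫ x in (0 : ℝ)..s, exp (a * x ^ 2) ≤ ∫ _ in (0 : ℝ)..s, exp (a * s ^ 2) := by
          refine integral_mono_on hs0.le (hint 0 s)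
            (continuous_const.intervalIntegrable _ _) fun x hx => ?_
          gcongr
          exacts [hx.1, hx.2]
      _ = s * exp (a * s ^ 2) := by simp
  · calc ∫ x in s..1, exp (a * x ^ 2) ≤ ∫ x in s..1, exp (a * (1 + s) * x + -(a * s)) := by
          refine integral_mono_on hs1.le (hint s 1)
            ((by fun_prop : Continuous _).intervalIntegrable _ _) fun x hx => ?_
          gcongr
          nlinarith [mul_nonneg (sub_nonneg.2 hx.1) (sub_nonneg.2 hx.2)]
      _ = (exp a - exp (a * s ^ 2)) / (a * (1 + s)) := by
          rw [integral_exp_mul_add (by positivity)]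
          ring_nf
      _ ≤ exp a / (a * (1 + s)) := by
          gcongr
          exact sub_le_self _ (exp_pos _).le

lemma eventually_lt_integral_exp_mul_sq_div {b : ℝ} (hb : b < 1) :
    ∀ᶠ a in atTop, b < (∫ x in (0 : ℝ)..1, exp (a * x ^ 2)) / (exp a / (2 * a)) := by
  have hlim : Tendsto (fun a : ℝ => 1 - exp (-(2 * a))) atTop (𝓝 1) := by
    simpa using (tendsto_exp_neg_atTop_nhds_zero.comp
      (tendsto_id.const_mul_atTop two_pos)).const_sub 1
  filter_upwards [hlim.eventually (lt_mem_nhds hb), eventually_gt_atTop 0] with a hlt ha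
  calc b < 1 - exp (-(2 * a)) := hlt
    _ = (exp a - exp (-a)) / (2 * a) / (exp a / (2 * a)) := by
        rw [show -a = -(2 * a) + a by ring, exp_add]
        field_simp
    _ ≤ _ := by gcongr; exact exp_sub_exp_neg_div_le_integral_exp_mul_sq ha

lemma eventually_integral_exp_mul_sq_div_lt {b : ℝ} (hb : 1 < b) :
    ∀ᶠ a in atTop, (∫ x in (0 : ℝ)..1, exp (a * x ^ 2)) / (exp a / (2 * a)) < b := by
  obtain ⟨s, hs, hsb⟩ : ∃ s ∈ Set.Ioo (0 : ℝ) 1, 2 / (1 + s) < b := by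
    have hcont : Tendsto (fun s : ℝ => 2 / (1 + s)) (𝓝[<] 1) (𝓝 1) := by
      have : ContinuousAt (fun s : ℝ => 2 / (1 + s)) 1 := by fun_prop (disch := norm_num)
      simpa [one_add_one_eq_two] using this.tendsto.mono_left nhdsWithin_le_nhds
    exact (Filter.Eventually.and (Ioo_mem_nhdsLT zero_lt_one)
      (hcont.eventually (gt_mem_nhds hb))).exists
  have hlim : Tendsto
      (fun a : ℝ => 2 * s * (a * exp (-(1 - s ^ 2) * a)) + 2 / (1 + s))
      atTop (𝓝 (2 / (1 + s))) := by
    have h := tendsto_rpow_mul_exp_neg_mul_atTop_nhds_zero 1 (1 - s ^ 2)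
      (by nlinarith [hs.1, hs.2])
    simpa using (h.const_mul (2 * s)).add_const (2 / (1 + s))
  filter_upwards [hlim.eventually (gt_mem_nhds hsb), eventually_gt_atTop 0] with a hlt ha
  calc _ ≤ (s * exp (a * s ^ 2) + exp a / (a * (1 + s))) / (exp a / (2 * a)) := by
        gcongr; exact integral_exp_mul_sq_le ha hs
    _ = 2 * s * (a * exp (-(1 - s ^ 2) * a)) + 2 / (1 + s) := by
        rw [show a * s ^ 2 = -(1 - s ^ 2) * a + a by ring, exp_add]
        have : 0 < 1 + s := by linarith [hs.1]
        field_simp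
    _ < b := hlt

lemma tendsto_integral_exp_mul_sq_div_atTop :
    Tendsto (fun a : ℝ => (∫ x in Set.Icc (0 : ℝ) 1, exp (a * x ^ 2)) / (exp a / (2 * a)))
      atTop (𝓝 1) := by
  simp only [integral_Icc_eq_integral_Ioc, ← integral_of_le zero_le_one]
  exact tendsto_order.2 ⟨fun _ => eventually_lt_integral_exp_mul_sq_div,
    fun _ => eventually_integral_exp_mul_sq_div_lt⟩

/-- With `c(h) = ∫_0^1 exp(x²/(2h²)) dx`, one has `c(h)/(h² exp(1/(2h²))) → 1` as
`h → 0⁺`. -/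
theorem normalisation_constant_asymptotics :
    Tendsto (fun h : ℝ =>
        (∫ x in Set.Icc (0 : ℝ) 1, Real.exp (x ^ 2 / (2 * h ^ 2))) /
          (h ^ 2 * Real.exp (1 / (2 * h ^ 2))))
      (nhdsWithin 0 (Set.Ioi 0)) (nhds 1) := by
  have hsubst : Tendsto (fun h : ℝ => h⁻¹ ^ 2 / 2) (𝓝[>] 0) atTop :=
    ((tendsto_pow_atTop two_ne_zero).comp tendsto_inv_nhdsGT_zero).atTop_div_const two_pos
  refine (tendsto_integral_exp_mul_sq_div_atTop.comp hsubst).congr' ?_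
  filter_upwards [self_mem_nhdsWithin] with h (hh : 0 < h)
  simp only [Function.comp_apply]
  congr 1
  · congr 1 with x
    ring_nf
  · field_simp
end
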